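/- arXiv:math/0403415 — 5 statements merged into one kernel-verified Lean document; each statement's English description precedes it below -/
import Mathlib

section
/- Let p be an odd prime and P a finite p-group of rank 1 (i.e., every elementary abelian p-subgroup of P is cyclic). Then P is cyclic. -/
/-!
Induct on `|P|`. A nontrivial `p`-group has a central subgroup `N` of order `p`. The rank-one
condition passes to `P ⧸ N`: otherwise `P ⧸ N` contains an elementary abelian `Ē` of order `p²`.
On its preimage `H` commutators lie in `N`, so `(xy)^p = x^p y^p [y,x]^(p choose 2)`; as `p` is
odd, `p ∣ p choose 2` and `x ↦ x^p` is a homomorphism `H → N`, whose kernel is an elementary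
abelian subgroup of `P` of order at least `|Ē| = p²`, which is impossible. Hence `P ⧸ N` is
cyclic, so `P` is abelian, all its elements of order `p` lie in `N`, and a generator of `P ⧸ N`
lifts to a generator of `P`.
-/

open Subgroup

section
variable {G : Type*} [Group G]

theorem Subgroup.pow_card_eq_one_of_mem {K : Subgroup G} {x : G} (hx : x ∈ K) :
    x ^ Nat.card K = 1 :=
  orderOf_dvd_iff_pow_eq_one.mp (K.orderOf_dvd_natCard hx)

theorem Subgroup.card_dvd_of_forall_pow_eq_one {p : ℕ} (K : Subgroup G) [IsCyclic K]
    (hK : ∀ x ∈ K, x ^ p = 1) : Nat.card K ∣ p := by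
  rw [← IsCyclic.exponent_eq_card]
  exact Monoid.exponent_dvd_of_forall_pow_eq_one fun x => Subtype.ext (hK x x.2)

theorem Subgroup.normal_of_le_center {N : Subgroup G} (hN : N ≤ center G) : N.Normal :=
  ⟨fun x hx g => by rwa [mem_center_iff.mp (hN hx) g, mul_inv_cancel_right]⟩

theorem pow_mul_eq_mul_pow_mul_pow {x y c : G} (h : y * x = x * y * c) (hc : c ∈ center G)
    (n : ℕ) : y ^ n * x = x * y ^ n * c ^ n := by
  have hconj : x⁻¹ * y * x⁻¹⁻¹ = y * c := by rw [inv_inv, mul_assoc, h]; group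
  have hyc : Commute y c := mem_center_iff.mp hc y
  calc y ^ n * x = x * (x⁻¹ * y * x⁻¹⁻¹) ^ n := by rw [conj_pow]; group
    _ = x * y ^ n * c ^ n := by rw [hconj, hyc.mul_pow, mul_assoc]

theorem mul_pow_eq_mul_pow_mul_pow_choose_two {x y c : G} (h : y * x = x * y * c)
    (hc : c ∈ center G) (n : ℕ) : (x * y) ^ n = x ^ n * y ^ n * c ^ n.choose 2 := by
  have hcpow (g : G) (k : ℕ) : c ^ k * g = g * c ^ k :=
    (Commute.pow_left (mem_center_iff.mp hc g).symm k).eq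
  induction n with
  | zero => simp
  | succ n ih =>
    calc (x * y) ^ (n + 1) = x ^ n * y ^ n * (c ^ n.choose 2 * (x * y)) := by
          rw [pow_succ, ih]; group
      _ = x ^ n * (y ^ n * x) * y * c ^ n.choose 2 := by rw [hcpow]; group
      _ = x ^ n * x * y ^ n * (c ^ n * y) * c ^ n.choose 2 := by
          rw [pow_mul_eq_mul_pow_mul_pow h hc]; group
      _ = x ^ (n + 1) * y ^ (n + 1) * c ^ (n + 1).choose 2 := by
          rw [hcpow, Nat.choose_succ_succ', Nat.choose_one_right]; group

theorem Nat.dvd_choose_two_of_odd {p : ℕ} (hodd : Odd p) : p ∣ p.choose 2 := by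
  obtain ⟨m, rfl⟩ := hodd
  refine ⟨m, ?_⟩
  rw [Nat.choose_two_right, Nat.add_sub_cancel, Nat.div_eq_of_eq_mul_left two_pos]
  ring

theorem mul_pow_eq_mul_pow_of_odd {p : ℕ} (hodd : Odd p) {x y c : G} (h : y * x = x * y * c)
    (hc : c ∈ center G) (hcp : c ^ p = 1) : (x * y) ^ p = x ^ p * y ^ p := by
  obtain ⟨k, hk⟩ := Nat.dvd_choose_two_of_odd hodd
  rw [mul_pow_eq_mul_pow_mul_pow_choose_two h hc, hk, pow_mul, hcp, one_pow, mul_one]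

theorem exists_le_card_forall_pow_eq_one_of_quotient [Finite G] {p : ℕ} (hodd : Odd p)
    {N : Subgroup G} [N.Normal] (hNc : N ≤ center G) (hNp : ∀ x ∈ N, x ^ p = 1)
    (E : Subgroup (G ⧸ N)) [IsMulCommutative E] (hEp : ∀ x ∈ E, x ^ p = 1) :
    ∃ K : Subgroup G, Nat.card E ≤ Nat.card K ∧ ∀ x ∈ K, x ^ p = 1 := by
  set H := E.comap (QuotientGroup.mk' N)
  have hcomm (a b : H) : ((a : G) * b)⁻¹ * (b * a) ∈ N := by
    have hab : ((a : G) : G ⧸ N) * b = b * a := setLike_mul_comm (s := E) a.2 b.2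
    rw [← QuotientGroup.eq_one_iff, QuotientGroup.mk_mul, QuotientGroup.mk_inv,
      QuotientGroup.mk_mul, QuotientGroup.mk_mul, hab, inv_mul_cancel]
  let φ : H →* G := MonoidHom.mk' (fun a => (a : G) ^ p) fun a b =>
    mul_pow_eq_mul_pow_of_odd hodd (by group) (hNc (hcomm a b)) (hNp _ (hcomm a b))
  have hrange : φ.range ≤ N := by
    rintro - ⟨a, rfl⟩
    rw [← QuotientGroup.eq_one_iff]
    exact hEp _ a.2
  have hH : Nat.card H = Nat.card N * Nat.card E := QuotientGroup.card_preimage_mk N E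
  have hφ : Nat.card φ.ker * Nat.card φ.range = Nat.card H := by
    rw [← index_ker, card_mul_index]
  refine ⟨φ.ker.map H.subtype, ?_, ?_⟩
  · rw [card_map_of_injective H.subtype_injective]
    have := card_le_of_le hrange
    have : 0 < Nat.card N := Nat.card_pos
    nlinarith
  · rintro - ⟨a, ha, rfl⟩
    exact ha

theorem IsPGroup.exists_le_card_eq_prime [Finite G] {p : ℕ} [Fact p.Prime] (hG : IsPGroup p G)
    {H : Subgroup G} (hH : H ≠ ⊥) : ∃ M ≤ H, Nat.card M = p := by
  obtain ⟨n, hn, hcard⟩ :=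
    (hG.to_subgroup H).nontrivial_iff_card.mp ((nontrivial_iff_ne_bot H).mpr hH)
  simpa using Sylow.exists_subgroup_le_card_pow_prime_of_le_card (n := 1) Fact.out hG
    (hcard ▸ Nat.pow_le_pow_right (Fact.out : p.Prime).pos hn)

theorem IsPGroup.exists_le_card_eq_sq_of_not_isCyclic [Finite G] {p : ℕ} [Fact p.Prime]
    (hG : IsPGroup p G) {E : Subgroup G} (hE : ¬IsCyclic E) : ∃ F ≤ E, Nat.card F = p ^ 2 := by
  obtain ⟨k, hk⟩ := IsPGroup.iff_card.mp (hG.to_subgroup E)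
  refine Sylow.exists_subgroup_le_card_pow_prime_of_le_card Fact.out hG
    (hk ▸ Nat.pow_le_pow_right (Fact.out : p.Prime).pos ?_)
  by_contra! hk1
  exact hE (isCyclic_of_card_dvd_prime (hk ▸ (pow_dvd_pow p (by omega)).trans (pow_one p).dvd))

theorem mem_of_pow_eq_one_of_isMulCommutative [IsMulCommutative G] [Finite G] {p : ℕ}
    (hrank : ∀ K : Subgroup G, (∀ x ∈ K, x ^ p = 1) → IsCyclic K) {N : Subgroup G}
    (hN : Nat.card N = p) {x : G} (hx : x ^ p = 1) : x ∈ N := by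
  let Ω : Subgroup G :=
    (MonoidHom.mk' (· ^ p) fun a b => Commute.mul_pow (Std.Commutative.comm a b) p).ker
  have hNΩ : N ≤ Ω := fun y hy => show y ^ p = 1 from hN ▸ pow_card_eq_one_of_mem hy
  have := hrank Ω fun y hy => hy
  have hp : 0 < p := hN ▸ Nat.card_pos
  have hΩN : N = Ω := eq_of_le_of_card_ge hNΩ <|
    hN ▸ Nat.le_of_dvd hp (Ω.card_dvd_of_forall_pow_eq_one fun y hy => hy)
  exact hΩN ▸ hx

theorem IsPGroup.isCyclic_of_isCyclic_quotient [Finite G] {p : ℕ} [Fact p.Prime]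
    (hG : IsPGroup p G) {N : Subgroup G} [N.Normal] [IsCyclic (G ⧸ N)] (hN : Nat.card N = p)
    (hΩ : ∀ x : G, x ^ p = 1 → x ∈ N) : IsCyclic G := by
  obtain ⟨g', hg'⟩ := isCyclic_iff_exists_zpowers_eq_top.mp ‹IsCyclic (G ⧸ N)›
  obtain ⟨g, rfl⟩ := QuotientGroup.mk_surjective g'
  have htop : zpowers g ⊔ N = ⊤ := by
    rw [← QuotientGroup.ker_mk' N, ← comap_map_eq, MonoidHom.map_zpowers,
      QuotientGroup.mk'_apply, hg', comap_top]
  rcases eq_or_ne g 1 with rfl | hg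
  · rw [zpowers_one_eq_bot, bot_sup_eq] at htop
    exact isCyclic_of_prime_card (by rw [← card_top, ← htop, hN])
  · obtain ⟨M, hMg, hM⟩ := hG.exists_le_card_eq_prime (zpowers_ne_bot.mpr hg)
    have hMN : M = N :=
      eq_of_le_of_card_ge (fun y hy => hΩ y (hM ▸ pow_card_eq_one_of_mem hy)) (hM ▸ hN.le)
    rw [sup_eq_left.mpr (hMN ▸ hMg)] at htop
    exact isCyclic_iff_exists_zpowers_eq_top.mpr ⟨g, htop⟩

end

/-- A finite `p`-group, `p` an odd prime, in which every elementary abelian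
`p`-subgroup is cyclic (rank 1), is cyclic. -/
theorem stmt4 {P : Type*} [Group P] [Fintype P] (p : ℕ) (hp : p.Prime) (hodd : Odd p)
    (hP : IsPGroup p P)
    (h : ∀ E : Subgroup P, (∀ x ∈ E, x ^ p = 1) → IsCyclic E) :
    IsCyclic P := by
  have := Fact.mk hp
  induction hn : Nat.card P using Nat.strong_induction_on generalizing P with
  | _ n ih =>
  rcases subsingleton_or_nontrivial P with _ | _
  · exact isCyclic_of_subsingleton
  obtain ⟨N, hNc, hN⟩ :=
    hP.exists_le_card_eq_prime ((nontrivial_iff_ne_bot _).mp hP.center_nontrivial)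
  have := normal_of_le_center hNc
  have hQ : IsCyclic (P ⧸ N) := by
    let := Fintype.ofFinite (P ⧸ N)
    refine ih _ ?_ (hP.to_quotient N) (fun E hE => ?_) rfl
    · rw [← hn, card_eq_card_quotient_mul_card_subgroup N, hN]
      exact lt_mul_of_one_lt_right Nat.card_pos hp.one_lt
    · by_contra hEc
      obtain ⟨F, hFE, hF⟩ := (hP.to_quotient N).exists_le_card_eq_sq_of_not_isCyclic hEc
      have := IsPGroup.isMulCommutative_of_card_eq_prime_sq hF
      obtain ⟨K, hFK, hK⟩ := exists_le_card_forall_pow_eq_one_of_quotient hodd hNc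
        (fun x hx => hN ▸ pow_card_eq_one_of_mem hx) F (fun x hx => hE x (hFE hx))
      have := h K hK
      have hKp := Nat.le_of_dvd hp.pos (K.card_dvd_of_forall_pow_eq_one hK)
      nlinarith [hp.two_le]
  have := (QuotientGroup.mk' N).isMulCommutative_of_isCyclic_of_ker_le_center
    (by rwa [QuotientGroup.ker_mk'])
  exact hP.isCyclic_of_isCyclic_quotient hN fun x hx =>
    mem_of_pow_eq_one_of_isMulCommutative h hN hx
end

section
/- Let G be a finite group, H, K ≤ G subgroups, and let σ₁, …, σ_r be representatives of the K-H double cosets in G. Let U be a set with a free G-action. Then the map from the disjoint union over i of U/L_i (where L_i = K ∩ σ_i H σ_i⁻¹) to the fiber product (U/K) ×_{U/G} (U/H), sending the class of u in U/L_i to (class of u in U/K, class of σ_i⁻¹·u in U/H), is a bijection. -/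
/-!
A point of the fiber product is a pair of classes `(⟦u⟧_K, ⟦v⟧_H)` with `u = g • v`. Freeness
makes `g` unique once the representatives are fixed, and changing them moves `g` within `K g H`.
Writing `g = k σᵢ h`, the pair is represented by `(u', σᵢ⁻¹ • u')` with `u' = k⁻¹ • u`, and two
such `u'` give the same pair exactly when they differ by an element of `K ∩ σᵢ H σᵢ⁻¹`.
-/

open MulAction DoubleCoset

section

variable {G U : Type*} [Group G] [MulAction G U]

lemma eq_of_smul_eq_smul_of_free (hfree : ∀ (g : G) (u : U), g • u = u → g = 1)
    {g g' : G} {u : U} (h : g • u = g' • u) : g = g' :=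
  (inv_mul_eq_one.mp (hfree _ u (by rw [mul_smul, h, inv_smul_smul]))).symm

lemma orbitRel_mk_out_mk (K : Subgroup G) (u : U) :
    (⟦(⟦u⟧ : Quotient (orbitRel K U)).out⟧ : Quotient (orbitRel G U)) = ⟦u⟧ :=
  orbitRel.quotient_eq_of_quotient_subgroup_eq (Quotient.out_eq _)

lemma orbitRel_mk_smul_of_mem {K : Subgroup G} {k : G} (hk : k ∈ K) (u : U) :
    (⟦k • u⟧ : Quotient (orbitRel K U)) = ⟦u⟧ :=
  Quotient.sound ⟨⟨k, hk⟩, rfl⟩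

lemma Subgroup.mem_map_conj_iff {H : Subgroup G} {s l : G} :
    l ∈ H.map (MulAut.conj s).toMonoidHom ↔ s⁻¹ * l * s ∈ H := by
  rw [Subgroup.mem_map_equiv, MulAut.conj_symm_apply]

variable (U) in
abbrev OrbitFiberProduct (K H : Subgroup G) : Type _ :=
  {z : Quotient (orbitRel K U) × Quotient (orbitRel H U) //
    (⟦z.1.out⟧ : Quotient (orbitRel G U)) = ⟦z.2.out⟧}

def OrbitFiberProduct.mkOfConj (K H : Subgroup G) (s : G) (u : U) : OrbitFiberProduct U K H :=
  ⟨(⟦u⟧, ⟦s⁻¹ • u⟧), by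
    rw [orbitRel_mk_out_mk, orbitRel_mk_out_mk]
    exact Quotient.sound ⟨s, smul_inv_smul s u⟩⟩

variable {K H : Subgroup G}

lemma OrbitFiberProduct.mkOfConj_eq_of_rel {s : G} {a b : U}
    (hab : orbitRel (K ⊓ H.map (MulAut.conj s).toMonoidHom : Subgroup G) U a b) :
    mkOfConj K H s a = mkOfConj K H s b := by
  obtain ⟨⟨l, hlK, hlH⟩, rfl⟩ := hab
  have hl : s⁻¹ • l • b = (s⁻¹ * l * s) • s⁻¹ • b := by
    rw [smul_smul, smul_smul, mul_inv_cancel_right]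
  refine Subtype.ext (Prod.ext ?_ ?_)
  · exact orbitRel_mk_smul_of_mem hlK b
  · show (⟦s⁻¹ • l • b⟧ : Quotient (orbitRel H U)) = ⟦s⁻¹ • b⟧
    rw [hl]
    exact orbitRel_mk_smul_of_mem (Subgroup.mem_map_conj_iff.mp hlH) _

variable (K H) in
def OrbitFiberProduct.ofConjInterOrbits {ι : Type*} (σ : ι → G) :
    (Σ i, Quotient (orbitRel (K ⊓ H.map (MulAut.conj (σ i)).toMonoidHom : Subgroup G) U)) →
      OrbitFiberProduct U K H :=
  fun p => Quotient.lift (mkOfConj K H (σ p.1)) (fun _ _ => mkOfConj_eq_of_rel) p.2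

lemma OrbitFiberProduct.ofConjInterOrbits_injective {ι : Type*} {σ : ι → G}
    (hfree : ∀ (g : G) (u : U), g • u = u → g = 1)
    (hσ : ∀ i j, σ i ∈ doubleCoset (σ j) K H → i = j) :
    Function.Injective (ofConjInterOrbits (U := U) K H σ) := by
  rintro ⟨i, x⟩ ⟨j, y⟩ hxy
  induction x using Quotient.inductionOn with | h u => ?_
  induction y using Quotient.inductionOn with | h v => ?_
  obtain ⟨⟨k, hk⟩, hkvu⟩ := Quotient.exact (congrArg (fun z => z.1.1) hxy)
  obtain ⟨⟨h, hh⟩, hhvu⟩ := Quotient.exact (congrArg (fun z => z.1.2) hxy)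
  have hkvu : k • v = u := hkvu
  have hhvu : h • (σ j)⁻¹ • v = (σ i)⁻¹ • u := hhvu
  have hk_eq : k = σ i * h * (σ j)⁻¹ :=
    eq_of_smul_eq_smul_of_free hfree (by rw [hkvu, mul_smul, mul_smul, hhvu, smul_inv_smul])
  obtain rfl : i = j :=
    hσ i j (mem_doubleCoset.mpr ⟨k, hk, h⁻¹, inv_mem hh, by rw [hk_eq]; group⟩)
  refine congrArg (Sigma.mk i) (Quotient.sound ⟨⟨k, hk, Subgroup.mem_map_conj_iff.mpr ?_⟩, hkvu⟩)
  rwa [hk_eq, show (σ i)⁻¹ * (σ i * h * (σ i)⁻¹) * σ i = h by group]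

lemma OrbitFiberProduct.ofConjInterOrbits_surjective {ι : Type*} {σ : ι → G}
    (hσ : ∀ g, ∃ i, g ∈ doubleCoset (σ i) K H) :
    Function.Surjective (ofConjInterOrbits (U := U) K H σ) := by
  rintro ⟨⟨x, y⟩, hxy⟩
  obtain ⟨g, hg⟩ := Quotient.exact hxy
  have hg : g • y.out = x.out := hg
  obtain ⟨i, hi⟩ := hσ g
  obtain ⟨k, hk, h, hh, rfl⟩ := mem_doubleCoset.mp hi
  refine ⟨⟨i, ⟦k⁻¹ • x.out⟧⟩, Subtype.ext (Prod.ext ?_ ?_)⟩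
  · exact (orbitRel_mk_smul_of_mem (inv_mem hk) _).trans x.out_eq
  · show (⟦(σ i)⁻¹ • k⁻¹ • x.out⟧ : Quotient (orbitRel H U)) = y
    rw [← hg, smul_smul, smul_smul, show (σ i)⁻¹ * k⁻¹ * (k * σ i * h) = h by group,
      orbitRel_mk_smul_of_mem hh, Quotient.out_eq]

end

theorem stmt6_general {G U : Type*} [Group G] [MulAction G U]
    (hfree : ∀ (g : G) (u : U), g • u = u → g = 1)
    (K H : Subgroup G) (r : ℕ) (σ : Fin r → G)
    (hdc : ∀ g : G, ∃! i : Fin r, ∃ x ∈ K, ∃ y ∈ H, g = x * σ i * y) :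
    ∃ f : (Σ i : Fin r,
        Quotient (MulAction.orbitRel
          (K ⊓ Subgroup.map (MulAut.conj (σ i)).toMonoidHom H : Subgroup G) U)) →
      {z : Quotient (MulAction.orbitRel K U) × Quotient (MulAction.orbitRel H U) //
        (Quotient.mk (MulAction.orbitRel G U) z.1.out : Quotient (MulAction.orbitRel G U)) =
          Quotient.mk (MulAction.orbitRel G U) z.2.out},
      Function.Bijective f ∧
      ∀ (i : Fin r) (u : U),
        (f ⟨i, Quotient.mk _ u⟩).1.1 = Quotient.mk _ u ∧
        (f ⟨i, Quotient.mk _ u⟩).1.2 = Quotient.mk _ ((σ i)⁻¹ • u) := by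
  refine ⟨OrbitFiberProduct.ofConjInterOrbits K H σ,
    ⟨OrbitFiberProduct.ofConjInterOrbits_injective hfree fun i j hij => ?_,
      OrbitFiberProduct.ofConjInterOrbits_surjective fun g => ?_⟩,
    fun _ _ => ⟨rfl, rfl⟩⟩
  · exact (hdc (σ i)).unique (mem_doubleCoset.mp (mem_doubleCoset_self K H (σ i)))
      (mem_doubleCoset.mp hij)
  · exact (hdc g).exists.imp fun _ => mem_doubleCoset.mpr

/-- Double coset decomposition of the pull-back: if a finite group `G` acts freely on
`U`, `K, H ≤ G`, and `σ₁,…,σ_r` represent the `K`-`H` double cosets, then the map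
`⨆ᵢ U/Lᵢ → (U/K) ×_{U/G} (U/H)` (with `Lᵢ = K ∩ σᵢHσᵢ⁻¹`) sending the class of `u`
in `U/Lᵢ` to `(class of u in U/K, class of σᵢ⁻¹·u in U/H)` is a bijection. -/
theorem stmt6 {G U : Type*} [Group G] [Fintype G] [MulAction G U]
    (hfree : ∀ (g : G) (u : U), g • u = u → g = 1)
    (K H : Subgroup G) (r : ℕ) (σ : Fin r → G)
    (hdc : ∀ g : G, ∃! i : Fin r, ∃ x ∈ K, ∃ y ∈ H, g = x * σ i * y) :
    ∃ f : (Σ i : Fin r,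
        Quotient (MulAction.orbitRel
          (K ⊓ Subgroup.map (MulAut.conj (σ i)).toMonoidHom H : Subgroup G) U)) →
      {z : Quotient (MulAction.orbitRel K U) × Quotient (MulAction.orbitRel H U) //
        (Quotient.mk (MulAction.orbitRel G U) z.1.out : Quotient (MulAction.orbitRel G U)) =
          Quotient.mk (MulAction.orbitRel G U) z.2.out},
      Function.Bijective f ∧
      ∀ (i : Fin r) (u : U),
        (f ⟨i, Quotient.mk _ u⟩).1.1 = Quotient.mk _ u ∧
        (f ⟨i, Quotient.mk _ u⟩).1.2 = Quotient.mk _ ((σ i)⁻¹ • u) :=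
  stmt6_general hfree K H r σ hdc
end

section
/- For any n and any prime p, a Sylow p-subgroup of the symmetric group S_n is isomorphic to a direct product of iterated wreath products of copies of ℤ/p (equivalently, it embeds in a direct product of groups of the form S_p ≀ S_p ≀ ⋯ ≀ S_p). -/
/-!
Write `n = ∑ⱼ dⱼ pʲ` in base `p` and cut `Fin n` into `dⱼ` blocks of size `pʲ` for every `j`.
The `j`-fold iterated wreath product of `ℤ/p` acts faithfully on a block of size `pʲ`, so the
product of these wreath products embeds in `Sₙ`. Its order is `p ^ e` with
`(p - 1) * e = ∑ⱼ dⱼ (pʲ - 1) = n - s_p(n)`, which by Legendre's formula is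
`(p - 1) * v_p(n!)`. Hence the image is a Sylow `p`-subgroup, and all of them are conjugate.
-/

/-- The action of a permutation of `ι` on `ι → M` by permuting coordinates. -/
def permAut (ι M : Type*) [Group M] : Equiv.Perm ι →* MulAut (ι → M) where
  toFun σ := MulEquiv.arrowCongr σ (MulEquiv.refl M)
  map_one' := by ext; rfl
  map_mul' := by intro a b; ext; rfl

/-- `ℤ/p` acting on itself by translation, as permutations. -/
def shiftHom (p : ℕ) : Multiplicative (ZMod p) →* Equiv.Perm (ZMod p) where
  toFun c := Equiv.addLeft c.toAdd
  map_one' := by ext x; simp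
  map_mul' := by intro a b; ext x; simp [add_assoc]

/-- The iterated wreath product `ℤ/p ≀ ⋯ ≀ ℤ/p` (`k` times), with its group
structure: `IWaux p 0` is trivial and
`IWaux p (k+1) = (IWaux p k)^p ⋊ ℤ/p`, the cyclic group permuting the factors. -/
def IWaux (p : ℕ) : ℕ → (T : Type) × Group T :=
  fun k => Nat.rec ⟨PUnit, inferInstance⟩
    (fun _ ih =>
      letI : Group ih.1 := ih.2
      ⟨(ZMod p → ih.1) ⋊[(permAut (ZMod p) ih.1).comp (shiftHom p)]
          Multiplicative (ZMod p), inferInstance⟩) k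

/-- The `k`-fold iterated wreath product of `ℤ/p`. -/
def IW (p k : ℕ) : Type := (IWaux p k).1

instance (p k : ℕ) : Group (IW p k) := (IWaux p k).2

open Equiv Finset

-- Both sides multiply as `(v, a) * (w, b) = (v * w (· - a), a + b)`.
def shiftSemidirectMulEquivWreath (p : ℕ) (D : Type*) [Group D] :
    (ZMod p → D) ⋊[(permAut (ZMod p) D).comp (shiftHom p)] Multiplicative (ZMod p) ≃*
      D ≀ᵣ Multiplicative (ZMod p) where
  toFun x := ⟨x.left, x.right⟩
  invFun x := ⟨x.left, x.right⟩
  left_inv _ := rfl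
  right_inv _ := rfl
  map_mul' _ _ := rfl

namespace IW

def mulEquivIteratedWreathProduct (p : ℕ) :
    ∀ k, IW p k ≃* IteratedWreathProduct (Multiplicative (ZMod p)) k
  | 0 => MulEquiv.refl _
  | k + 1 => (shiftSemidirectMulEquivWreath p (IW p k)).trans
      (RegularWreathProduct.congr (mulEquivIteratedWreathProduct p k) (MulEquiv.refl _))

theorem card (p k : ℕ) [NeZero p] : Nat.card (IW p k) = p ^ ∑ i ∈ range k, p ^ i := by
  rw [Nat.card_congr (mulEquivIteratedWreathProduct p k).toEquiv, IteratedWreathProduct.card,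
    Nat.card_eq_fintype_card, Fintype.card_multiplicative, ZMod.card]

theorem exists_injective_pi_perm {ι : Type*} [Fintype ι] (p : ℕ) [NeZero p] (c : ι → ℕ)
    {α : Type*} [Finite α] (hα : Nat.card α = ∑ i, p ^ c i) :
    ∃ f : (∀ i, IW p (c i)) →* Perm α, Function.Injective f := by
  let G := Multiplicative (ZMod p)
  have hcard : Nat.card (Σ i, Fin (c i) → G) = Nat.card α := by simp [hα, G]
  let e : (Σ i, Fin (c i) → G) ≃ α :=
    (Finite.equivFinOfCardEq hcard).trans (Finite.equivFinOfCardEq rfl).symm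
  let toPerm i : IW p (c i) →* Perm (Fin (c i) → G) :=
    (iteratedWreathToPermHom G (c i)).comp (mulEquivIteratedWreathProduct p (c i)).toMonoidHom
  refine ⟨e.permCongrHom.toMonoidHom.comp
    ((Perm.sigmaCongrRightHom _).comp (MonoidHom.piMap toPerm)), ?_⟩
  exact e.permCongrHom.injective.comp <| Perm.sigmaCongrRightHom_injective.comp <|
    Function.Injective.piMap fun i =>
      (iteratedWreathToPermHomInj G (c i)).comp (MulEquiv.injective _)

end IW

def digitPositions : List ℕ → List ℕ
  | [] => []
  | d :: ds => List.replicate d 0 ++ (digitPositions ds).map (· + 1)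

theorem length_digitPositions (ds : List ℕ) : (digitPositions ds).length = ds.sum := by
  induction ds with
  | nil => rfl
  | cons d ds ih => simp [digitPositions, ih]

theorem sum_map_pow_digitPositions (b : ℕ) (ds : List ℕ) :
    ((digitPositions ds).map (b ^ ·)).sum = Nat.ofDigits b ds := by
  induction ds with
  | nil => rfl
  | cons d ds ih =>
    simp [digitPositions, Nat.ofDigits_cons, ← ih, Function.comp_def, pow_succ',
      List.sum_map_mul_left]

theorem sub_one_mul_sum_geom_sum_add_length {p : ℕ} (hp : 1 ≤ p) (L : List ℕ) :
    (p - 1) * (L.map fun c => ∑ i ∈ range c, p ^ i).sum + L.length = (L.map (p ^ ·)).sum := by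
  induction L with
  | nil => rfl
  | cons c L ih =>
    have hc : (p - 1) * ∑ i ∈ range c, p ^ i + 1 = p ^ c := by
      rw [mul_comm, geom_sum_mul_of_one_le hp, Nat.sub_add_cancel (Nat.one_le_pow _ _ hp)]
    simp only [List.map_cons, List.sum_cons, List.length_cons, ← ih, ← hc]
    ring

theorem sum_geom_sum_digitPositions {p : ℕ} (hp : p.Prime) (n : ℕ) :
    ((digitPositions (p.digits n)).map fun c => ∑ i ∈ range c, p ^ i).sum =
      n.factorial.factorization p := by
  have key := sub_one_mul_sum_geom_sum_add_length hp.one_lt.le (digitPositions (p.digits n))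
  rw [length_digitPositions, sum_map_pow_digitPositions, Nat.ofDigits_digits] at key
  have legendre := hp.sub_one_mul_multiplicity_factorial (n := n)
  rw [Nat.multiplicity_eq_factorization hp n.factorial_ne_zero] at legendre
  have hp1 : 0 < p - 1 := Nat.sub_pos_of_lt hp.one_lt
  exact Nat.eq_of_mul_eq_mul_left hp1 (by omega)

theorem Sylow.nonempty_mulEquiv_of_injective {G H : Type*} [Group G] [Group H] [Finite G]
    {p : ℕ} [Fact p.Prime] (P : Sylow p G) {f : H →* G} (hf : Function.Injective f)
    (hH : Nat.card H = p ^ (Nat.card G).factorization p) : Nonempty (P ≃* H) := by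
  let e := MonoidHom.ofInjective hf
  exact ⟨(P.equiv (Sylow.ofCard f.range (by rwa [← Nat.card_congr e.toEquiv]))).trans e.symm⟩

/-- A Sylow `p`-subgroup of the symmetric group `S_n` is isomorphic to a direct
product of iterated wreath products of copies of `ℤ/p`. -/
theorem stmt9 (n p : ℕ) (hp : p.Prime) (S : Sylow p (Equiv.Perm (Fin n))) :
    ∃ (m : ℕ) (c : Fin m → ℕ),
      Nonempty (S.toSubgroup ≃* ((i : Fin m) → IW p (c i))) := by
  have := Fact.mk hp
  have : NeZero p := ⟨hp.ne_zero⟩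
  set L := digitPositions (p.digits n)
  refine ⟨L.length, fun i => L[(i : ℕ)], ?_⟩
  obtain ⟨f, hf⟩ := IW.exists_injective_pi_perm p (fun i : Fin L.length => L[(i : ℕ)])
    (α := Fin n) (by rw [Nat.card_fin, Fin.sum_univ_fun_getElem L (p ^ ·),
      sum_map_pow_digitPositions, Nat.ofDigits_digits])
  refine S.nonempty_mulEquiv_of_injective hf ?_
  rw [Nat.card_pi, Nat.card_perm, Nat.card_fin, ← sum_geom_sum_digitPositions hp,
    ← Fin.sum_univ_fun_getElem L, ← Finset.prod_pow_eq_pow_sum]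
  exact Finset.prod_congr rfl fun i _ => IW.card p _
end

section
/- Let p be a prime and G a group. In the wreath product W = ℤ/p ≀ G = ℤ/p ⋉ G^p, the base subgroup G^p is normal, and for any g ∈ S_p ≀ G (with ℤ/p ≤ S_p the subgroup generated by a p-cycle), the intersection W ∩ gWg⁻¹ is either W or G^p. -/
/-!
Conjugation by `g` in `S_p ≀ G` carries the preimage of `⟨c⟩` to the preimage of
`σ⟨c⟩σ⁻¹`, where `σ` is the image of `g` in `S_p`; so `W ∩ gWg⁻¹` is the preimage of
`⟨c⟩ ∩ σ⟨c⟩σ⁻¹`. As `⟨c⟩` has prime order `p`, this intersection is `⟨c⟩` or trivial,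
and its preimage is `W` or the base `G^p` respectively.
-/

theorem Subgroup.map_conj_comap {G H : Type*} [Group G] [Group H] (f : G →* H)
    (K : Subgroup H) (g : G) :
    (K.comap f).map (MulAut.conj g).toMonoidHom =
      (K.map (MulAut.conj (f g)).toMonoidHom).comap f := by
  ext x
  simp only [Subgroup.mem_map_equiv, Subgroup.mem_comap, MulAut.conj_symm_apply, map_mul,
    map_inv]

theorem Subgroup.inf_eq_left_or_eq_bot_of_card_prime {G : Type*} [Group G] {H : Subgroup G}
    (hH : (Nat.card H).Prime) (K : Subgroup G) : H ⊓ K = H ∨ H ⊓ K = ⊥ := by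
  have hdvd : Nat.card ↥(H ⊓ K) ∣ Nat.card H := Subgroup.card_dvd_of_le inf_le_left
  rcases hH.eq_one_or_self_of_dvd _ hdvd with hone | hfull
  · exact Or.inr (Subgroup.eq_bot_of_card_eq _ hone)
  · have : Finite H := Nat.finite_of_card_ne_zero hH.ne_zero
    exact Or.inl (Subgroup.eq_of_le_of_card_ge inf_le_left hfull.ge)

theorem stmt10_general (p : ℕ) (hp : p.Prime) (G : Type*) [Group G]
    (c : Equiv.Perm (Fin p)) (hord : orderOf c = p) :
    ((SemidirectProduct.rightHom :
        ((Fin p → G) ⋊[permAut (Fin p) G] Equiv.Perm (Fin p)) →* Equiv.Perm (Fin p)).ker.subgroupOf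
      (Subgroup.comap SemidirectProduct.rightHom (Subgroup.zpowers c))).Normal ∧
    ∀ g : (Fin p → G) ⋊[permAut (Fin p) G] Equiv.Perm (Fin p),
      (Subgroup.comap SemidirectProduct.rightHom (Subgroup.zpowers c)) ⊓
          Subgroup.map (MulAut.conj g).toMonoidHom
            (Subgroup.comap SemidirectProduct.rightHom (Subgroup.zpowers c)) =
        Subgroup.comap SemidirectProduct.rightHom (Subgroup.zpowers c) ∨
      (Subgroup.comap SemidirectProduct.rightHom (Subgroup.zpowers c)) ⊓
          Subgroup.map (MulAut.conj g).toMonoidHom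
            (Subgroup.comap SemidirectProduct.rightHom (Subgroup.zpowers c)) =
        (SemidirectProduct.rightHom :
          ((Fin p → G) ⋊[permAut (Fin p) G] Equiv.Perm (Fin p)) →* Equiv.Perm (Fin p)).ker := by
  refine ⟨(MonoidHom.normal_ker _).subgroupOf _, fun g => ?_⟩
  have hcard : (Nat.card (Subgroup.zpowers c)).Prime := by
    rwa [Nat.card_zpowers, hord]
  rw [Subgroup.map_conj_comap, ← Subgroup.comap_inf, ← MonoidHom.comap_bot]
  exact (Subgroup.inf_eq_left_or_eq_bot_of_card_prime hcard _).imp (congrArg _) (congrArg _)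

/-- In `S_p ≀ G = G^p ⋊ S_p`, let `W = ℤ/p ≀ G` be the preimage of the subgroup
generated by a `p`-cycle `c`, with base subgroup `B = G^p`. Then `B` is normal in `W`,
and for every `g ∈ S_p ≀ G`, the intersection `W ∩ gWg⁻¹` is either `W` or `B`. -/
theorem stmt10 (p : ℕ) (hp : p.Prime) (G : Type*) [Group G]
    (c : Equiv.Perm (Fin p)) (hcyc : c.IsCycle) (hord : orderOf c = p) :
    ((SemidirectProduct.rightHom :
        ((Fin p → G) ⋊[permAut (Fin p) G] Equiv.Perm (Fin p)) →* Equiv.Perm (Fin p)).ker.subgroupOf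
      (Subgroup.comap SemidirectProduct.rightHom (Subgroup.zpowers c))).Normal ∧
    ∀ g : (Fin p → G) ⋊[permAut (Fin p) G] Equiv.Perm (Fin p),
      (Subgroup.comap SemidirectProduct.rightHom (Subgroup.zpowers c)) ⊓
          Subgroup.map (MulAut.conj g).toMonoidHom
            (Subgroup.comap SemidirectProduct.rightHom (Subgroup.zpowers c)) =
        Subgroup.comap SemidirectProduct.rightHom (Subgroup.zpowers c) ∨
      (Subgroup.comap SemidirectProduct.rightHom (Subgroup.zpowers c)) ⊓
          Subgroup.map (MulAut.conj g).toMonoidHom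
            (Subgroup.comap SemidirectProduct.rightHom (Subgroup.zpowers c)) =
        (SemidirectProduct.rightHom :
          ((Fin p → G) ⋊[permAut (Fin p) G] Equiv.Perm (Fin p)) →* Equiv.Perm (Fin p)).ker :=
  stmt10_general p hp G c hord
end

section
/- Let p be a prime, W = ℤ/p ≀ G the wreath product with base B = G^p, and let N: M^{⊗p} → (M^{⊗p})^{ℤ/p} be the norm map x ↦ Σ_{c ∈ ℤ/p} c·x for a vector space M over 𝔽_p with ℤ/p acting by cyclic permutation of tensor factors. Then there is an exact sequence 0 → N(M^{⊗p}) → (M^{⊗p})^{ℤ/p} → Φ M → 0, where Φ M denotes the image of the diagonal map x ↦ x ⊗ ⋯ ⊗ x spanned linearly; i.e., the invariants modulo norms are spanned by the classes of the diagonal tensors x^{⊗p}. -/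
open scoped TensorProduct

/-!
A basis `e` of `M` gives the basis `e f₁ ⊗ ⋯ ⊗ e f_p` of `M^{⊗p}`, and the cyclic shift permutes
it, so `M^{⊗p}` is a permutation module. An invariant vector has coefficients constant on orbits.
Since `p` is prime, an orbit is either a fixed point, i.e. a diagonal tensor `e i ⊗ ⋯ ⊗ e i`, or
has exactly `p` elements, in which case its orbit sum is the norm of any one of them. Subtracting
orbit sums one at a time shrinks the support.
-/

theorem Module.End.range_sum_pow_le_ker_sub_id {R V : Type*} [Semiring R] [AddCommGroup V]
    [Module R V] {σ : Module.End R V} {n : ℕ} (hσ : σ ^ n = 1) :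
    LinearMap.range (∑ j : Fin n, σ ^ (j : ℕ)) ≤ LinearMap.ker (σ - LinearMap.id) := by
  rintro _ ⟨v, rfl⟩
  have h : (σ - 1) * ∑ j : Fin n, σ ^ (j : ℕ) = 0 := by
    rw [Fin.sum_univ_eq_sum_range (σ ^ ·), mul_geom_sum, hσ, sub_self]
  exact LinearMap.congr_fun h v

namespace Module.Basis

variable {R V X : Type*} [Ring R] [AddCommGroup V] [Module R V] (b : Basis X R V)
  {π : Equiv.Perm X} {σ : Module.End R V}

theorem repr_apply_perm (hσ : ∀ x, σ (b x) = b (π x)) (v : V) (x : X) :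
    b.repr (σ v) (π x) = b.repr v x := by
  have h : Finsupp.lapply (π x) ∘ₗ b.repr.toLinearMap ∘ₗ σ =
      Finsupp.lapply x ∘ₗ b.repr.toLinearMap :=
    b.ext fun y => by simp [hσ, Finsupp.single_apply_left π.injective]
  exact LinearMap.congr_fun h v

theorem repr_apply_pow_perm_of_invariant (hσ : ∀ x, σ (b x) = b (π x)) {v : V}
    (hv : σ v = v) (n : ℕ) (x : X) : b.repr v ((π ^ n) x) = b.repr v x := by
  induction n with
  | zero => rfl
  | succ n ih => rw [pow_succ', Equiv.Perm.mul_apply, ← hv, b.repr_apply_perm hσ, hv, ih]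

theorem pow_apply_of_apply_eq (hσ : ∀ x, σ (b x) = b (π x)) (n : ℕ) (x : X) :
    (σ ^ n) (b x) = b ((π ^ n) x) := by
  induction n with
  | zero => rfl
  | succ n ih => rw [pow_succ', Module.End.mul_apply, ih, hσ, pow_succ', Equiv.Perm.mul_apply]

theorem pow_eq_one_of_apply_eq (hσ : ∀ x, σ (b x) = b (π x)) {n : ℕ} (hπ : π ^ n = 1) :
    σ ^ n = 1 :=
  b.ext fun x => by rw [b.pow_apply_of_apply_eq hσ, hπ]; rfl

variable {p : ℕ} [Fact p.Prime]

theorem exists_invariant_supported_on_orbit (hσ : ∀ x, σ (b x) = b (π x))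
    (hπ : π ^ p = 1) (x : X) :
    ∃ w ∈ LinearMap.range (∑ j : Fin p, σ ^ (j : ℕ)) ⊔ Submodule.span R (b '' {y | π y = y}),
      σ w = w ∧ b.repr w x = 1 ∧ ∀ y, b.repr w y ≠ 0 → ∃ n : ℕ, (π ^ n) x = y := by
  by_cases hx : π x = x
  · refine ⟨b x, Submodule.mem_sup_right (Submodule.subset_span ⟨x, hx, rfl⟩), by rw [hσ, hx],
      by simp, fun y hy => ⟨0, ?_⟩⟩
    simp only [repr_self, ne_eq, Finsupp.single_apply_ne_zero] at hy
    exact hy.1.symm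
  have h_period : Function.minimalPeriod π x = p := by
    refine Function.minimalPeriod_eq_prime ?_ hx
    rw [Function.IsPeriodicPt, Function.IsFixedPt, Equiv.Perm.iterate_eq_pow, hπ]
    rfl
  have h_repr (y : X) : b.repr ((∑ j : Fin p, σ ^ (j : ℕ)) (b x)) y =
      ∑ j : Fin p, Finsupp.single ((π ^ (j : ℕ)) x) 1 y := by
    simp only [LinearMap.sum_apply, b.pow_apply_of_apply_eq hσ, map_sum, repr_self,
      Finsupp.finsetSum_apply]
  refine ⟨_, Submodule.mem_sup_left ⟨b x, rfl⟩, ?_, ?_, fun y hy => ?_⟩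
  · have h := Module.End.range_sum_pow_le_ker_sub_id (b.pow_eq_one_of_apply_eq hσ hπ)
      ⟨b x, rfl⟩
    rwa [LinearMap.mem_ker, LinearMap.sub_apply, LinearMap.id_apply, sub_eq_zero] at h
  · -- `x` has exact period `p`, so `b x` occurs only once in its norm.
    rw [h_repr, Fintype.sum_eq_single ⟨0, (Fact.out : p.Prime).pos⟩]
    · simp
    intro j hj
    refine Finsupp.single_apply_eq_zero.mpr fun hjx => ?_
    have h_periodic : Function.IsPeriodicPt π j x := by
      rw [Function.IsPeriodicPt, Function.IsFixedPt, Equiv.Perm.iterate_eq_pow, ← hjx]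
    have h_dvd : p ∣ j := h_period ▸ h_periodic.minimalPeriod_dvd
    exact absurd (Fin.ext (Nat.eq_zero_of_dvd_of_lt h_dvd j.isLt)) hj
  · rw [h_repr] at hy
    obtain ⟨j, -, hj⟩ := Finset.exists_ne_zero_of_sum_ne_zero hy
    exact ⟨j, (Finsupp.single_apply_ne_zero.mp hj).1.symm⟩

theorem ker_sub_id_le_range_sup_span_fixed (hσ : ∀ x, σ (b x) = b (π x)) (hπ : π ^ p = 1) :
    LinearMap.ker (σ - LinearMap.id) ≤
      LinearMap.range (∑ j : Fin p, σ ^ (j : ℕ)) ⊔ Submodule.span R (b '' {y | π y = y}) := by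
  intro v hv
  rw [LinearMap.mem_ker, LinearMap.sub_apply, LinearMap.id_apply, sub_eq_zero] at hv
  induction hn : (b.repr v).support.card using Nat.strong_induction_on generalizing v with
  | _ n ih =>
  obtain hv0 | ⟨x, hx⟩ := (b.repr v).support.eq_empty_or_nonempty
  · rw [Finsupp.support_eq_empty, LinearEquiv.map_eq_zero_iff] at hv0
    rw [hv0]
    exact Submodule.zero_mem _
  obtain ⟨w, hwS, hσw, hwx, hw_orbit⟩ := b.exists_invariant_supported_on_orbit hσ hπ x
  set v' := v - b.repr v x • w with hv'
  have hσv' : σ v' = v' := by rw [hv', map_sub, map_smul, hv, hσw]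
  have h_supp : (b.repr v').support ⊂ (b.repr v).support := by
    refine Finset.ssubset_iff_of_subset ?_ |>.mpr ⟨x, hx, by simp [hv', hwx]⟩
    intro y hy
    rw [Finsupp.mem_support_iff] at hy ⊢
    by_cases hwy : b.repr w y = 0
    · simpa [hv', hwy] using hy
    obtain ⟨k, rfl⟩ := hw_orbit y hwy
    rwa [b.repr_apply_pow_perm_of_invariant hσ hv, ← Finsupp.mem_support_iff]
  have hv'S := ih _ (hn ▸ Finset.card_lt_card h_supp) hσv' rfl
  rw [← sub_add_cancel v (b.repr v x • w)]
  exact Submodule.add_mem _ hv'S (Submodule.smul_mem _ _ hwS)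

end Module.Basis

theorem Equiv.Perm.IsCycle.apply_eq_apply_of_comp_eq {α β : Type*} [Finite α]
    {r : Equiv.Perm α} (hr : r.IsCycle) {f : α → β} (hf : f ∘ r = f) {a a' : α} (ha : r a ≠ a)
    (ha' : r a' ≠ a') : f a = f a' := by
  have h_pow (k : ℕ) : f ((r ^ k) a) = f a := by
    induction k with
    | zero => rfl
    | succ k ih => rw [pow_succ', Equiv.Perm.mul_apply, ← Function.comp_apply (f := f), hf, ih]
  obtain ⟨k, rfl⟩ := hr.exists_pow_eq ha ha'
  exact (h_pow k).symm

theorem finRotate_pow_self {n : ℕ} : finRotate n ^ n = 1 := by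
  rcases lt_or_ge n 2 with h | h
  · interval_cases n <;> exact Subsingleton.elim _ _
  · have h_order : orderOf (finRotate n) = n := by
      rw [(isCycle_finRotate_of_le h).orderOf, support_finRotate_of_le h, Finset.card_univ,
        Fintype.card_fin]
    simpa only [h_order] using pow_orderOf_eq_one (finRotate n)

theorem Equiv.arrowCongr_refl_pow {ι I : Type*} (r : Equiv.Perm ι) (n : ℕ) :
    (r.arrowCongr (Equiv.refl I)) ^ n = (r ^ n).arrowCongr (Equiv.refl I) := by
  induction n with
  | zero => rfl
  | succ n ih => rw [pow_succ, ih, pow_succ]; rfl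

/-- Invariants modulo norms for the cyclic permutation action of `ℤ/p` on `M^{⊗p}`:
with `σ` the cyclic shift and `N = Σ_{j<p} σ^j` the norm map, the norms are invariant
and the invariants are spanned by the norms together with the diagonal tensors
`x ⊗ ⋯ ⊗ x` (exactness of `0 → N(M^{⊗p}) → (M^{⊗p})^{ℤ/p} → ΦM → 0`). -/
theorem stmt16 (p : ℕ) [Fact p.Prime] (M : Type*) [AddCommGroup M]
    [Module (ZMod p) M] :
    LinearMap.range
        (∑ j : Fin p,
          ((PiTensorProduct.reindex (ZMod p) (fun _ : Fin p => M)
                (finRotate p)).toLinearMap ^ (j : ℕ))) ≤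
      LinearMap.ker
        ((PiTensorProduct.reindex (ZMod p) (fun _ : Fin p => M)
            (finRotate p)).toLinearMap - LinearMap.id) ∧
    LinearMap.ker
        ((PiTensorProduct.reindex (ZMod p) (fun _ : Fin p => M)
            (finRotate p)).toLinearMap - LinearMap.id) =
      LinearMap.range
          (∑ j : Fin p,
            ((PiTensorProduct.reindex (ZMod p) (fun _ : Fin p => M)
                  (finRotate p)).toLinearMap ^ (j : ℕ))) ⊔
        Submodule.span (ZMod p)
          (Set.range fun m : M =>
            PiTensorProduct.tprod (ZMod p) (fun _ : Fin p => m)) := by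
  have hp : p.Prime := Fact.out
  set σ := (PiTensorProduct.reindex (ZMod p) (fun _ : Fin p => M) (finRotate p)).toLinearMap
  set diagonal := Submodule.span (ZMod p)
    (Set.range fun m : M => PiTensorProduct.tprod (ZMod p) (fun _ : Fin p => m))
  let e := Module.Free.chooseBasis (ZMod p) M
  let b := Basis.piTensorProduct (fun _ : Fin p => e)
  let π := (finRotate p).arrowCongr (Equiv.refl (Module.Free.ChooseBasisIndex (ZMod p) M))
  have hσ (f) : σ (b f) = b (π f) := by
    simp only [σ, b, π, Basis.piTensorProduct_apply, LinearEquiv.coe_coe,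
      PiTensorProduct.reindex_tprod]
    rfl
  have hπ : π ^ p = 1 := by rw [Equiv.arrowCongr_refl_pow, finRotate_pow_self]; rfl
  have h_norm := Module.End.range_sum_pow_le_ker_sub_id (b.pow_eq_one_of_apply_eq hσ hπ)
  have h_diagonal : diagonal ≤ LinearMap.ker (σ - LinearMap.id) := by
    refine Submodule.span_le.mpr ?_
    rintro _ ⟨m, rfl⟩
    simp [σ, PiTensorProduct.reindex_tprod]
  have h_fixed : Submodule.span (ZMod p) (b '' {f | π f = f}) ≤ diagonal := by
    refine Submodule.span_mono ?_
    rintro _ ⟨f, hf, rfl⟩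
    have h_moved (i : Fin p) : finRotate p i ≠ i :=
      Equiv.Perm.mem_support.mp (support_finRotate_of_le hp.two_le ▸ Finset.mem_univ i)
    have h_invariant : f ∘ finRotate p = f := funext fun i => by
      simpa only [π, Equiv.arrowCongr_apply, Equiv.coe_refl, Function.comp_apply, id,
        Equiv.symm_apply_apply] using (congrFun hf (finRotate p i)).symm
    refine ⟨e (f ⟨0, hp.pos⟩), ?_⟩
    simp only [b, Basis.piTensorProduct_apply]
    congr 1
    funext i
    exact congrArg e ((isCycle_finRotate_of_le hp.two_le).apply_eq_apply_of_comp_eq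
      h_invariant (h_moved _) (h_moved i))
  exact ⟨h_norm, le_antisymm ((b.ker_sub_id_le_range_sup_span_fixed hσ hπ).trans
    (sup_le_sup_left h_fixed _)) (sup_le h_norm h_diagonal)⟩
end
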